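/- arXiv:2105.04883 — 4 statements merged into one kernel-verified Lean document; each statement's English description precedes it below -/
import Mathlib

section
/- Let X and Y be connected graphs of bounded degree with counting measures, and suppose X is amenable. If a map f : X → Y is both quasi-κ₁-to-one and quasi-κ₂-to-one for real numbers κ₁, κ₂ > 0, then κ₁ = κ₂. -/
open Set

/-- Closed `R`-neighborhood of a vertex set in a graph, for the graph metric. -/
def gNbhd {X : Type*} (G : SimpleGraph X) (A : Set X) (R : ℕ) : Set X :=
  {x | ∃ a ∈ A, G.dist x a ≤ R}

/-- `R`-boundary `∂_R A := A^{+R} ∩ (complement A)^{+R}`. -/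
def gBdryR {X : Type*} (G : SimpleGraph X) (A : Set X) (R : ℕ) : Set X :=
  gNbhd G A R ∩ gNbhd G Aᶜ R

/-- Outer boundary `∂A := A^{+1} \ A`. -/
def gBdry {X : Type*} (G : SimpleGraph X) (A : Set X) : Set X :=
  gNbhd G A 1 \ A

/-- All vertex degrees are at most `D`. -/
def BddDeg {X : Type*} (G : SimpleGraph X) (D : ℕ) : Prop :=
  ∀ v, (G.neighborSet v).ncard ≤ D

/-- `f` is a `(C,K)`-quasi-isometry for the graph metrics. -/
def IsQIWith {X Y : Type*} (G : SimpleGraph X) (H : SimpleGraph Y) (C K : ℝ)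
    (f : X → Y) : Prop :=
  (∀ x y : X, (1 / C) * (G.dist x y : ℝ) - K ≤ (H.dist (f x) (f y) : ℝ) ∧
    (H.dist (f x) (f y) : ℝ) ≤ C * (G.dist x y : ℝ) + K) ∧
  ∀ y : Y, ∃ x : X, (H.dist y (f x) : ℝ) ≤ K

/-- `f` is a quasi-isometry for the graph metrics. -/
def IsQI {X Y : Type*} (G : SimpleGraph X) (H : SimpleGraph Y) (f : X → Y) : Prop :=
  ∃ C K : ℝ, 1 ≤ C ∧ 0 ≤ K ∧ IsQIWith G H C K f

/-- `f : X → Y` is quasi-`κ`-to-one: `|κ|A| - |f⁻¹(A)|| ≤ C|∂A|` for all finite `A ⊆ Y`. -/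
def QuasiKToOne {X Y : Type*} (H : SimpleGraph Y) (f : X → Y) (κ : ℝ) : Prop :=
  ∃ C : ℝ, 0 < C ∧ ∀ A : Set Y, A.Finite →
    |κ * (A.ncard : ℝ) - ((f ⁻¹' A).ncard : ℝ)| ≤ C * ((gBdry H A).ncard : ℝ)

/-- Amenability via a Følner sequence: finite nonempty sets with vanishing
boundary-to-size ratio. -/
def IsAmenableGraph {X : Type*} (G : SimpleGraph X) : Prop :=
  ∃ A : ℕ → Set X, (∀ n, (A n).Finite ∧ (A n).Nonempty) ∧
    Filter.Tendsto (fun n => ((gBdry G (A n)).ncard : ℝ) / ((A n).ncard : ℝ))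
      Filter.atTop (nhds 0)

/-- Uniqueness of the scaling factor: over an amenable source (and an
amenable target, as the argument uses a Følner sequence in `Y`), a map can be
quasi-`κ`-to-one for at most one `κ > 0`. -/
theorem scaling_factor_unique {X Y : Type*} (G : SimpleGraph X) (H : SimpleGraph Y)
    (DX DY : ℕ) (hGc : G.Connected) (hHc : H.Connected)
    (hG : BddDeg G DX) (hH : BddDeg H DY)
    (hamX : IsAmenableGraph G) (hamY : IsAmenableGraph H)
    (f : X → Y) (κ₁ κ₂ : ℝ) (hκ₁ : 0 < κ₁) (hκ₂ : 0 < κ₂)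
    (h₁ : QuasiKToOne H f κ₁) (h₂ : QuasiKToOne H f κ₂) :
    κ₁ = κ₂ := by
  obtain ⟨A, hA, hlim⟩ := hamY
  obtain ⟨C₁, hC₁, hb₁⟩ := h₁
  obtain ⟨C₂, hC₂, hb₂⟩ := h₂
  have key : ∀ n, |κ₁ - κ₂| ≤ (C₁ + C₂) * (((gBdry H (A n)).ncard : ℝ) / ((A n).ncard : ℝ)) := by
    intro n
    obtain ⟨hfin, hne⟩ := hA n
    have hpos : (0 : ℝ) < ((A n).ncard : ℝ) := by
      exact_mod_cast Nat.pos_of_ne_zero (by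
        simpa [Set.ncard_eq_zero hfin] using hne.ne_empty)
    have h1 := hb₁ (A n) hfin
    have h2 := hb₂ (A n) hfin
    have htri : |κ₁ - κ₂| * ((A n).ncard : ℝ)
        ≤ (C₁ + C₂) * ((gBdry H (A n)).ncard : ℝ) := by
      have : |κ₁ - κ₂| * ((A n).ncard : ℝ) = |(κ₁ - κ₂) * ((A n).ncard : ℝ)| := by
        rw [abs_mul, abs_of_nonneg hpos.le]
      rw [this]
      have heq : (κ₁ - κ₂) * ((A n).ncard : ℝ)
          = (κ₁ * ((A n).ncard : ℝ) - ((f ⁻¹' (A n)).ncard : ℝ))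
            - (κ₂ * ((A n).ncard : ℝ) - ((f ⁻¹' (A n)).ncard : ℝ)) := by ring
      rw [heq, add_mul]
      exact (abs_sub _ _).trans (add_le_add h1 h2)
    rw [← mul_div_assoc, le_div_iff₀ hpos]
    exact htri
  have hlim2 : Filter.Tendsto
      (fun n => (C₁ + C₂) * (((gBdry H (A n)).ncard : ℝ) / ((A n).ncard : ℝ)))
      Filter.atTop (nhds 0) := by
    simpa using hlim.const_mul (C₁ + C₂)
  have habs : |κ₁ - κ₂| ≤ 0 :=
    le_of_tendsto_of_tendsto' tendsto_const_nhds hlim2 key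
  have := abs_nonneg (κ₁ - κ₂)
  have : |κ₁ - κ₂| = 0 := le_antisymm habs this
  linarith [abs_eq_zero.mp this]
end

section
/- Let X, Y, Z be connected graphs of bounded degree. If f : X → Y is a quasi-κ₁-to-one quasi-isometry and g : Y → Z is a quasi-κ₂-to-one quasi-isometry, then the composition g∘f : X → Z is a quasi-(κ₁κ₂)-to-one quasi-isometry. -/
open Set

/-! Split `κ₁κ₂|A| - |(g ∘ f)⁻¹ A|` as `κ₁ (κ₂|A| - |g⁻¹ A|) + (κ₁|g⁻¹ A| - |f⁻¹ (g⁻¹ A)|)`.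
The first term is controlled by `g`. For the second, apply the estimate for `f` to `g⁻¹ A`:
a vertex of `∂(g⁻¹ A)` is sent by `g` close to `∂A`, hence, `g` being a quasi-isometry, it lies in
a ball of fixed radius around a chosen preimage of a point of `∂A`; bounded degree bounds the size
of these balls, so `|∂(g⁻¹ A)| ≤ M |∂A|`.

Since `ncard` of an infinite set is `0`, `BddDeg` allows vertices of infinite degree. If `H` has
one, every finite set containing it has a boundary of `ncard` zero, which forces `f` to be exactly
`κ₁`-to-one, and the second term vanishes. If `H` is locally finite, the same argument shows that a
vertex of infinite degree in `I` would make `g` surjective, which the quasi-isometry bounds forbid.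
-/

lemma Set.Finite.ncard_biUnion_le_mul {α β : Type*} {s : Set α} (hs : s.Finite) (t : α → Set β)
    {m : ℕ} (hm : ∀ a ∈ s, (t a).ncard ≤ m) : (⋃ a ∈ s, t a).ncard ≤ s.ncard * m := by
  calc (⋃ a ∈ s, t a).ncard ≤ ∑ᶠ a ∈ s, (t a).ncard := hs.ncard_biUnion_le t
    _ = ∑ a ∈ hs.toFinset, (t a).ncard := finsum_mem_eq_finite_toFinset_sum _ hs
    _ ≤ hs.toFinset.card • m := Finset.sum_le_card_nsmul _ _ _ (by simpa using hm)
    _ = s.ncard * m := by rw [ncard_eq_toFinset_card s hs, smul_eq_mul]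

namespace SimpleGraph

variable {V : Type*} {G : SimpleGraph V}

lemma Connected.setOf_dist_le_succ_subset (hc : G.Connected) (x : V) (R : ℕ) :
    {y | G.dist x y ≤ R + 1} ⊆
      {y | G.dist x y ≤ R} ∪ ⋃ b ∈ {y | G.dist x y ≤ R}, G.neighborSet b := by
  intro y hy
  rcases le_or_gt (G.dist x y) R with h | h
  · exact Or.inl h
  · obtain ⟨p, hp⟩ := (hc y x).exists_walk_length_eq_dist
    cases p with
    | nil => simp at h
    | @cons _ b _ hadj q =>
      refine Or.inr (mem_biUnion (?_ : G.dist x b ≤ R) hadj.symm)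
      have hq := dist_le q
      rw [Walk.length_cons, dist_comm] at hp
      rw [dist_comm]
      change G.dist x y ≤ R + 1 at hy
      omega

lemma Connected.setOf_dist_le_zero (hc : G.Connected) (x : V) : {y | G.dist x y ≤ 0} = {x} := by
  ext y
  simp [hc.dist_eq_zero_iff, eq_comm]

lemma Connected.finite_setOf_dist_le (hc : G.Connected)
    (hloc : ∀ v, (G.neighborSet v).Finite) (x : V) (R : ℕ) :
    {y | G.dist x y ≤ R}.Finite := by
  induction R with
  | zero => exact hc.setOf_dist_le_zero x ▸ finite_singleton x
  | succ R ih =>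
    exact (ih.union (ih.biUnion fun b _ => hloc b)).subset (hc.setOf_dist_le_succ_subset x R)

lemma Connected.ncard_setOf_dist_le_le (hc : G.Connected)
    (hloc : ∀ v, (G.neighborSet v).Finite) {D : ℕ} (hD : BddDeg G D) (x : V) (R : ℕ) :
    {y | G.dist x y ≤ R}.ncard ≤ (D + 1) ^ R := by
  induction R with
  | zero => rw [hc.setOf_dist_le_zero x, ncard_singleton, pow_zero]
  | succ R ih =>
    have hball := hc.finite_setOf_dist_le hloc x R
    calc {y | G.dist x y ≤ R + 1}.ncard
        ≤ ({y | G.dist x y ≤ R} ∪ ⋃ b ∈ {y | G.dist x y ≤ R}, G.neighborSet b).ncard :=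
          ncard_le_ncard (hc.setOf_dist_le_succ_subset x R)
            (hball.union (hball.biUnion fun b _ => hloc b))
      _ ≤ {y | G.dist x y ≤ R}.ncard + {y | G.dist x y ≤ R}.ncard * D :=
          (ncard_union_le _ _).trans
            (Nat.add_le_add_left (hball.ncard_biUnion_le_mul _ fun b _ => hD b) _)
      _ ≤ (D + 1) ^ (R + 1) := by rw [pow_succ]; nlinarith

lemma Walk.exists_mem_gBdry_dist_le (hc : G.Connected) {A : Set V} {u v : V}
    (p : G.Walk u v) (hu : u ∉ A) (hv : v ∈ A) :
    ∃ w ∈ gBdry G A, G.dist u w ≤ p.length := by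
  induction p with
  | nil => exact absurd hv hu
  | @cons u b v hadj q ih =>
    have hub : G.dist u b = 1 := dist_eq_one_iff_adj.mpr hadj
    by_cases hb : b ∈ A
    · exact ⟨u, ⟨⟨b, hb, hub.le⟩, hu⟩, by simp⟩
    · obtain ⟨w, hw, hbw⟩ := ih hb hv
      refine ⟨w, hw, ?_⟩
      have := hc.dist_triangle (u := u) (v := b) (w := w)
      rw [Walk.length_cons]
      omega

lemma Connected.exists_mem_gBdry_dist_le (hc : G.Connected) {A : Set V} {u v : V}
    (hu : u ∉ A) (hv : v ∈ A) : ∃ w ∈ gBdry G A, G.dist u w ≤ G.dist u v := by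
  obtain ⟨p, hp⟩ := (hc u v).exists_walk_length_eq_dist
  exact hp ▸ p.exists_mem_gBdry_dist_le hc hu hv

lemma neighborSet_diff_subset_gBdry {A : Set V} {a : V} (ha : a ∈ A) :
    G.neighborSet a \ A ⊆ gBdry G A :=
  fun _ ⟨hv, hvA⟩ => ⟨⟨a, ha, (dist_eq_one_iff_adj.mpr (G.adj_symm hv)).le⟩, hvA⟩

lemma Connected.gBdry_subset_biUnion_neighborSet (hc : G.Connected) (A : Set V) :
    gBdry G A ⊆ ⋃ a ∈ A, G.neighborSet a := by
  rintro w ⟨⟨a, ha, hwa⟩, hwA⟩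
  have hne : w ≠ a := fun h => hwA (h ▸ ha)
  have : G.dist w a = 1 := by have := hc.pos_dist_of_ne hne; omega
  exact mem_biUnion ha (G.adj_symm (dist_eq_one_iff_adj.mp this))

lemma Connected.finite_gBdry (hc : G.Connected) (hloc : ∀ v, (G.neighborSet v).Finite)
    {A : Set V} (hA : A.Finite) : (gBdry G A).Finite :=
  (hA.biUnion fun a _ => hloc a).subset (hc.gBdry_subset_biUnion_neighborSet A)

end SimpleGraph

section QuasiIsometry

variable {X Y Z : Type*} {G : SimpleGraph X} {H : SimpleGraph Y} {I : SimpleGraph Z}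

lemma IsQI.comp (hIc : I.Connected) {f : X → Y} {g : Y → Z} (hf : IsQI G H f)
    (hg : IsQI H I g) : IsQI G I (g ∘ f) := by
  obtain ⟨C₁, K₁, hC₁, hK₁, hf_dist, hf_dense⟩ := hf
  obtain ⟨C₂, K₂, hC₂, hK₂, hg_dist, hg_dense⟩ := hg
  have hC₁K₁ : 0 ≤ C₂ * K₁ := by positivity
  refine ⟨C₁ * C₂, C₂ * K₁ + K₁ + 2 * K₂, one_le_mul_of_one_le_of_one_le hC₁ hC₂,
    by positivity, fun x y => ⟨?_, ?_⟩, fun z => ?_⟩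
  · have hX := (hf_dist x y).1
    have hY := (hg_dist (f x) (f y)).1
    have hscale : 1 / C₂ * (1 / C₁ * (G.dist x y : ℝ) - K₁) ≤ 1 / C₂ * H.dist (f x) (f y) := by
      gcongr
    have hK₁C₂ : K₁ / C₂ ≤ K₁ := div_le_self hK₁ hC₂
    have hexpand : 1 / C₂ * (1 / C₁ * (G.dist x y : ℝ) - K₁) =
        1 / (C₁ * C₂) * G.dist x y - K₁ / C₂ := by
      field_simp
    simp only [Function.comp_apply]
    linarith
  · have hX := (hf_dist x y).2
    have hY := (hg_dist (f x) (f y)).2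
    have hscale : C₂ * (H.dist (f x) (f y) : ℝ) ≤ C₂ * (C₁ * G.dist x y + K₁) := by gcongr
    simp only [Function.comp_apply]
    nlinarith
  · obtain ⟨y, hy⟩ := hg_dense z
    obtain ⟨x, hx⟩ := hf_dense y
    refine ⟨x, ?_⟩
    have htri : (I.dist z (g (f x)) : ℝ) ≤ I.dist z (g y) + I.dist (g y) (g (f x)) := by
      exact_mod_cast hIc.dist_triangle
    have hY := (hg_dist y (f x)).2
    have hscale : C₂ * (H.dist y (f x) : ℝ) ≤ C₂ * K₁ := by gcongr
    simp only [Function.comp_apply]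
    linarith

lemma IsQIWith.dist_le_floor_of_dist_image_le {C K : ℝ} {g : Y → Z} (hg : IsQIWith H I C K g)
    (hC : 0 < C) {x y : Y} {r : ℝ} (h : (I.dist (g x) (g y) : ℝ) ≤ r) :
    H.dist x y ≤ ⌊C * (r + K)⌋₊ := by
  apply Nat.le_floor
  have hlow := (hg.1 x y).1
  calc (H.dist x y : ℝ) = C * (1 / C * H.dist x y) := by field_simp
    _ ≤ C * (r + K) := by gcongr; linarith

end QuasiIsometry

section LocallyFinite

variable {Y Z : Type*} {H : SimpleGraph Y} {I : SimpleGraph Z} {g : Y → Z} {C K : ℝ}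

lemma IsQIWith.finite_preimage (hg : IsQIWith H I C K g) (hC : 0 < C) (hHc : H.Connected)
    (hloc : ∀ y, (H.neighborSet y).Finite) {A : Set Z} (hA : A.Finite) : (g ⁻¹' A).Finite := by
  rw [← biUnion_preimage_singleton]
  refine hA.biUnion fun z _ => ?_
  rcases (g ⁻¹' {z}).eq_empty_or_nonempty with h | ⟨x₀, hx₀⟩
  · simp [h]
  · refine (hHc.finite_setOf_dist_le hloc x₀ ⌊C * (0 + K)⌋₊).subset fun x hx => ?_
    refine hg.dist_le_floor_of_dist_image_le hC ?_
    simp_all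

lemma IsQIWith.finite_neighborSet_of_surjective (hg : IsQIWith H I C K g) (hC : 0 < C)
    (hHc : H.Connected) (hloc : ∀ y, (H.neighborSet y).Finite) (hsurj : Function.Surjective g)
    (z : Z) : (I.neighborSet z).Finite := by
  obtain ⟨b, rfl⟩ := hsurj z
  refine ((hHc.finite_setOf_dist_le hloc b ⌊C * (1 + K)⌋₊).image g).subset fun w hw => ?_
  obtain ⟨x, rfl⟩ := hsurj w
  have hbx : (I.dist (g b) (g x) : ℝ) ≤ 1 := by simp [SimpleGraph.dist_eq_one_iff_adj.mpr hw]
  exact ⟨x, hg.dist_le_floor_of_dist_image_le hC hbx, rfl⟩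

lemma IsQIWith.ncard_gBdry_preimage_le (hg : IsQIWith H I C K g) (hC : 0 < C)
    (hHc : H.Connected) (hIc : I.Connected) (hloc : ∀ y, (H.neighborSet y).Finite) {D : ℕ}
    (hD : BddDeg H D) {A : Set Z} (hA : (gBdry I A).Finite) :
    (gBdry H (g ⁻¹' A)).ncard ≤ (gBdry I A).ncard * (D + 1) ^ ⌊C * (C + 3 * K)⌋₊ := by
  choose xw hxw using hg.2
  have hcover : gBdry H (g ⁻¹' A) ⊆
      ⋃ w ∈ gBdry I A, {y | H.dist (xw w) y ≤ ⌊C * (C + 3 * K)⌋₊} := by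
    rintro y ⟨⟨b, hb, hyb⟩, hy⟩
    have hgyb : (I.dist (g y) (g b) : ℝ) ≤ C + K := by
      have := mul_le_of_le_one_right hC.le (show (H.dist y b : ℝ) ≤ 1 by exact_mod_cast hyb)
      linarith [(hg.1 y b).2]
    obtain ⟨w, hw, hyw⟩ := hIc.exists_mem_gBdry_dist_le hy hb
    have htri : (I.dist (g y) (g (xw w)) : ℝ) ≤ I.dist (g y) w + I.dist w (g (xw w)) := by
      exact_mod_cast hIc.dist_triangle
    have hgy : (I.dist (g y) (g (xw w)) : ℝ) ≤ C + 2 * K := by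
      have : (I.dist (g y) w : ℝ) ≤ I.dist (g y) (g b) := by exact_mod_cast hyw
      linarith [hxw w]
    refine mem_biUnion hw ?_
    rw [mem_ofPred_eq, SimpleGraph.dist_comm, show C + 3 * K = C + 2 * K + K by ring]
    exact hg.dist_le_floor_of_dist_image_le hC hgy
  calc (gBdry H (g ⁻¹' A)).ncard
      ≤ (⋃ w ∈ gBdry I A, {y | H.dist (xw w) y ≤ ⌊C * (C + 3 * K)⌋₊}).ncard :=
        ncard_le_ncard hcover (hA.biUnion fun w _ => hHc.finite_setOf_dist_le hloc _ _)
    _ ≤ _ := hA.ncard_biUnion_le_mul _ fun w _ => hHc.ncard_setOf_dist_le_le hloc hD _ _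

end LocallyFinite

section QuasiKToOne

variable {X Y Z : Type*} {H : SimpleGraph Y} {I : SimpleGraph Z} {f : X → Y} {κ : ℝ}

lemma QuasiKToOne.ncard_preimage_eq_of_mem (hf : QuasiKToOne H f κ) {y₀ : Y}
    (hy₀ : (H.neighborSet y₀).Infinite) {B : Set Y} (hB : B.Finite) (hy₀B : y₀ ∈ B) :
    ((f ⁻¹' B).ncard : ℝ) = κ * B.ncard := by
  obtain ⟨C, -, hC⟩ := hf
  have hbdry : (gBdry H B).ncard = 0 :=
    ((hy₀.sdiff hB).mono (SimpleGraph.neighborSet_diff_subset_gBdry hy₀B)).ncard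
  have := hC B hB
  rw [hbdry, Nat.cast_zero, mul_zero, abs_nonpos_iff, sub_eq_zero] at this
  exact this.symm

lemma QuasiKToOne.finite_preimage_of_infinite_neighborSet (hf : QuasiKToOne H f κ)
    (hκ : 0 < κ) {y₀ : Y} (hy₀ : (H.neighborSet y₀).Infinite) {B : Set Y} (hB : B.Finite) :
    (f ⁻¹' B).Finite := by
  have hpos : (0 : ℝ) < (insert y₀ B).ncard := by
    exact_mod_cast (ncard_pos (hB.insert y₀)).mpr (insert_nonempty _ _)
  have hins := hf.ncard_preimage_eq_of_mem hy₀ (hB.insert y₀) (mem_insert _ _)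
  have hfin : (f ⁻¹' insert y₀ B).Finite :=
    finite_of_ncard_pos (by exact_mod_cast hins ▸ mul_pos hκ hpos)
  exact hfin.subset (preimage_mono (subset_insert _ _))

lemma QuasiKToOne.ncard_preimage_eq_of_finite (hf : QuasiKToOne H f κ) (hκ : 0 < κ) {y₀ : Y}
    (hy₀ : (H.neighborSet y₀).Infinite) {B : Set Y} (hB : B.Finite) :
    ((f ⁻¹' B).ncard : ℝ) = κ * B.ncard := by
  by_cases hy₀B : y₀ ∈ B
  · exact hf.ncard_preimage_eq_of_mem hy₀ hB hy₀B
  have hins := hf.ncard_preimage_eq_of_mem hy₀ (hB.insert y₀) (mem_insert _ _)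
  have hsingle := hf.ncard_preimage_eq_of_mem hy₀ (finite_singleton y₀) rfl
  have hdisj : Disjoint (f ⁻¹' {y₀}) (f ⁻¹' B) := (disjoint_singleton_left.mpr hy₀B).preimage f
  rw [insert_eq, preimage_union, ncard_union_eq hdisj
    (hf.finite_preimage_of_infinite_neighborSet hκ hy₀ (finite_singleton y₀))
    (hf.finite_preimage_of_infinite_neighborSet hκ hy₀ hB), ← insert_eq,
    ncard_insert_of_notMem hy₀B hB] at hins
  rw [ncard_singleton] at hsingle
  push_cast at hins hsingle
  linarith

lemma QuasiKToOne.infinite_preimage_of_infinite_neighborSet (hf : QuasiKToOne H f κ)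
    (hκ : 0 < κ) {y₀ : Y} (hy₀ : (H.neighborSet y₀).Infinite) {B : Set Y} (hB : B.Infinite) :
    (f ⁻¹' B).Infinite := by
  intro hfin
  obtain ⟨n, hn⟩ := exists_nat_gt ((f ⁻¹' B).ncard / κ)
  obtain ⟨B', hB'B, hB'fin, rfl⟩ := hB.exists_subset_ncard_eq n
  have hle : ((f ⁻¹' B').ncard : ℝ) ≤ (f ⁻¹' B).ncard := by
    exact_mod_cast ncard_le_ncard (preimage_mono hB'B) hfin
  rw [div_lt_iff₀ hκ] at hn
  linarith [hf.ncard_preimage_eq_of_finite hκ hy₀ hB'fin]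

lemma QuasiKToOne.ncard_preimage_eq_of_infinite_neighborSet (hf : QuasiKToOne H f κ)
    (hκ : 0 < κ) {y₀ : Y} (hy₀ : (H.neighborSet y₀).Infinite) (B : Set Y) :
    ((f ⁻¹' B).ncard : ℝ) = κ * B.ncard := by
  rcases B.finite_or_infinite with hB | hB
  · exact hf.ncard_preimage_eq_of_finite hκ hy₀ hB
  · rw [hB.ncard, (hf.infinite_preimage_of_infinite_neighborSet hκ hy₀ hB).ncard]
    simp

lemma surjective_of_ncard_preimage_eq (hκ : 0 < κ)
    (h : ∀ B : Set Y, ((f ⁻¹' B).ncard : ℝ) = κ * B.ncard) : Function.Surjective f := by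
  intro y
  have hy := h {y}
  rw [ncard_singleton, Nat.cast_one, mul_one] at hy
  have hne : (f ⁻¹' {y}).ncard ≠ 0 := by
    intro h0
    rw [h0, Nat.cast_zero] at hy
    exact hκ.ne hy
  exact nonempty_of_ncard_ne_zero hne

lemma QuasiKToOne.comp_of_le {g : Y → Z} {κ₂ C : ℝ} (hg : QuasiKToOne I g κ₂) (hκ : 0 < κ)
    (hC : 0 ≤ C) (h : ∀ A : Set Z, A.Finite →
      |κ * ((g ⁻¹' A).ncard : ℝ) - ((f ⁻¹' (g ⁻¹' A)).ncard : ℝ)| ≤ C * (gBdry I A).ncard) :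
    QuasiKToOne I (g ∘ f) (κ * κ₂) := by
  obtain ⟨Cg, hCg, hgA⟩ := hg
  refine ⟨κ * Cg + C, by positivity, fun A hA => ?_⟩
  rw [preimage_comp]
  calc |κ * κ₂ * A.ncard - (f ⁻¹' (g ⁻¹' A)).ncard|
      = |κ * (κ₂ * A.ncard - (g ⁻¹' A).ncard) +
          (κ * (g ⁻¹' A).ncard - (f ⁻¹' (g ⁻¹' A)).ncard)| := by ring_nf
    _ ≤ κ * |κ₂ * A.ncard - (g ⁻¹' A).ncard| +
          |κ * (g ⁻¹' A).ncard - (f ⁻¹' (g ⁻¹' A)).ncard| :=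
        (abs_add_le _ _).trans_eq (by rw [abs_mul, abs_of_pos hκ])
    _ ≤ κ * (Cg * (gBdry I A).ncard) + C * (gBdry I A).ncard := by
        gcongr
        exacts [hgA A hA, h A hA]
    _ = (κ * Cg + C) * (gBdry I A).ncard := by ring

end QuasiKToOne

theorem quasiKToOne_comp_general {X Y Z : Type*}
    (G : SimpleGraph X) (H : SimpleGraph Y) (I : SimpleGraph Z)
    (DY : ℕ) (hHc : H.Connected) (hIc : I.Connected)
    (hH : BddDeg H DY)
    (f : X → Y) (g : Y → Z) (κ₁ κ₂ : ℝ) (hκ₁ : 0 < κ₁) (hκ₂ : 0 < κ₂)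
    (hf : IsQI G H f) (hg : IsQI H I g)
    (hfκ : QuasiKToOne H f κ₁) (hgκ : QuasiKToOne I g κ₂) :
    IsQI G I (g ∘ f) ∧ QuasiKToOne I (g ∘ f) (κ₁ * κ₂) := by
  refine ⟨hf.comp hIc hg, ?_⟩
  by_cases hHloc : ∀ y, (H.neighborSet y).Finite
  · obtain ⟨C, K, hC, -, hgC⟩ := hg
    have hC₀ : 0 < C := zero_lt_one.trans_le hC
    have hIloc : ∀ z, (I.neighborSet z).Finite := by
      by_contra! ⟨z₀, hz₀⟩
      have hsurj := surjective_of_ncard_preimage_eq hκ₂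
        (hgκ.ncard_preimage_eq_of_infinite_neighborSet hκ₂ hz₀)
      exact hz₀ (hgC.finite_neighborSet_of_surjective hC₀ hHc hHloc hsurj z₀)
    obtain ⟨Cf, hCf, hfA⟩ := hfκ
    set M : ℝ := ((DY : ℝ) + 1) ^ ⌊C * (C + 3 * K)⌋₊ with hM
    refine hgκ.comp_of_le hκ₁ (C := Cf * M) (by positivity) fun A hA => ?_
    have hbdry : ((gBdry H (g ⁻¹' A)).ncard : ℝ) ≤ (gBdry I A).ncard * M := by
      rw [hM]
      exact_mod_cast hgC.ncard_gBdry_preimage_le hC₀ hHc hIc hHloc hH (hIc.finite_gBdry hIloc hA)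
    calc _ ≤ Cf * (gBdry H (g ⁻¹' A)).ncard := hfA _ (hgC.finite_preimage hC₀ hHc hHloc hA)
      _ ≤ Cf * ((gBdry I A).ncard * M) := by gcongr
      _ = Cf * M * (gBdry I A).ncard := by ring
  · obtain ⟨y₀, hy₀⟩ := not_forall.mp hHloc
    refine hgκ.comp_of_le hκ₁ le_rfl fun A _ => ?_
    simp [hfκ.ncard_preimage_eq_of_infinite_neighborSet hκ₁ hy₀]

/-- The composition of a quasi-`κ₁`-to-one quasi-isometry with a
quasi-`κ₂`-to-one quasi-isometry is a quasi-`κ₁κ₂`-to-one quasi-isometry. -/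
theorem quasiKToOne_comp {X Y Z : Type*}
    (G : SimpleGraph X) (H : SimpleGraph Y) (I : SimpleGraph Z)
    (DX DY DZ : ℕ) (hGc : G.Connected) (hHc : H.Connected) (hIc : I.Connected)
    (hG : BddDeg G DX) (hH : BddDeg H DY) (hI : BddDeg I DZ)
    (f : X → Y) (g : Y → Z) (κ₁ κ₂ : ℝ) (hκ₁ : 0 < κ₁) (hκ₂ : 0 < κ₂)
    (hf : IsQI G H f) (hg : IsQI H I g)
    (hfκ : QuasiKToOne H f κ₁) (hgκ : QuasiKToOne I g κ₂) :
    IsQI G I (g ∘ f) ∧ QuasiKToOne I (g ∘ f) (κ₁ * κ₂) :=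
  quasiKToOne_comp_general G H I DY hHc hIc hH f g κ₁ κ₂ hκ₁ hκ₂ hf hg hfκ hgκ
end

section
/- The map f : ℤ → ℤ defined by f(n) = n for n ≥ 0 and f(n) = 2n for n < 0 is a quasi-isometry of ℤ (with the standard metric) but is not quasi-κ-to-one for any κ > 0. -/
open Set

/-- Closed `1`-neighborhood of a set of integers (for the standard metric of `ℤ`,
which is the graph metric of its standard Cayley graph). -/
def zNbhd (A : Set ℤ) : Set ℤ := {x | ∃ a ∈ A, |x - a| ≤ 1}

/-- Boundary `∂A := A^{+1} \ A` in `ℤ`. -/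
def zBdry (A : Set ℤ) : Set ℤ := zNbhd A \ A

/-- The map `n ↦ n` for `n ≥ 0`, `n ↦ 2n` for `n < 0`. -/
def fZ : ℤ → ℤ := fun n => if 0 ≤ n then n else 2 * n

lemma ncard_Icc_int (a b : ℤ) : (Set.Icc a b).ncard = (b + 1 - a).toNat := by
  rw [← Finset.coe_Icc, Set.ncard_coe_finset, Int.card_Icc]

lemma preimage1 (n : ℤ) :
    fZ ⁻¹' (Set.Icc (-(2 * n)) (-1)) = Set.Icc (-n) (-1) := by
  ext x
  simp only [Set.mem_preimage, Set.mem_Icc, fZ]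
  split_ifs <;> omega

lemma preimage2 (n : ℤ) : fZ ⁻¹' (Set.Icc 0 n) = Set.Icc 0 n := by
  ext x
  simp only [Set.mem_preimage, Set.mem_Icc, fZ]
  split_ifs <;> omega

lemma bdry_Icc (a b : ℤ) (h : a ≤ b) :
    zBdry (Set.Icc a b) = {a - 1, b + 1} := by
  ext x
  simp only [zBdry, zNbhd, Set.mem_diff, Set.mem_setOf_eq, Set.mem_Icc,
    Set.mem_insert_iff, Set.mem_singleton_iff]
  constructor
  · rintro ⟨⟨y, ⟨hy1, hy2⟩, hxy⟩, hx⟩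
    rw [abs_le] at hxy
    omega
  · rintro (rfl | rfl)
    · exact ⟨⟨a, ⟨le_refl a, h⟩, by rw [abs_le]; omega⟩, by omega⟩
    · exact ⟨⟨b, ⟨h, le_refl b⟩, by rw [abs_le]; omega⟩, by omega⟩

/-- `fZ` is a quasi-isometry of `ℤ` but is not quasi-`κ`-to-one for
any `κ > 0`. -/
theorem fZ_quasiIsometry_not_quasiKToOne :
    (∃ C K : ℝ, 1 ≤ C ∧ 0 ≤ K ∧
      (∀ x y : ℤ, (1 / C) * (|x - y| : ℤ) - K ≤ ((|fZ x - fZ y| : ℤ) : ℝ) ∧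
        ((|fZ x - fZ y| : ℤ) : ℝ) ≤ C * (|x - y| : ℤ) + K) ∧
      ∀ y : ℤ, ∃ x : ℤ, ((|y - fZ x| : ℤ) : ℝ) ≤ K) ∧
    ∀ κ : ℝ, 0 < κ → ¬ ∃ C : ℝ, 0 < C ∧ ∀ A : Set ℤ, A.Finite →
      |κ * (A.ncard : ℝ) - ((fZ ⁻¹' A).ncard : ℝ)| ≤ C * ((zBdry A).ncard : ℝ) := by
  constructor
  · refine ⟨2, 1, by norm_num, by norm_num, ?_, ?_⟩
    · intro x y
      have h1 : (x - y).natAbs ≤ (fZ x - fZ y).natAbs := by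
        simp only [fZ]; split_ifs <;> omega
      have h2 : (fZ x - fZ y).natAbs ≤ 2 * (x - y).natAbs := by
        simp only [fZ]; split_ifs <;> omega
      have h1' : |x - y| ≤ |fZ x - fZ y| := by
        rw [Int.abs_eq_natAbs, Int.abs_eq_natAbs]; exact_mod_cast h1
      have h2' : |fZ x - fZ y| ≤ 2 * |x - y| := by
        rw [Int.abs_eq_natAbs, Int.abs_eq_natAbs]; exact_mod_cast h2
      have hr1 : ((|x - y| : ℤ) : ℝ) ≤ ((|fZ x - fZ y| : ℤ) : ℝ) := by exact_mod_cast h1'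
      have hr2 : ((|fZ x - fZ y| : ℤ) : ℝ) ≤ 2 * ((|x - y| : ℤ) : ℝ) := by exact_mod_cast h2'
      have hnn : (0 : ℝ) ≤ ((|x - y| : ℤ) : ℝ) := by exact_mod_cast abs_nonneg (x - y)
      constructor <;> linarith
    · intro y
      rcases le_or_gt 0 y with h | h
      · refine ⟨y, ?_⟩
        have : |y - fZ y| ≤ (1 : ℤ) := by
          rw [abs_le]; simp only [fZ]; split_ifs <;> omega
        exact_mod_cast this
      · rcases Int.even_or_odd y with ⟨k, hk⟩ | ⟨k, hk⟩
        · refine ⟨k, ?_⟩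
          have : |y - fZ k| ≤ (1 : ℤ) := by
            rw [abs_le]; simp only [fZ]; split_ifs <;> omega
          exact_mod_cast this
        · refine ⟨k, ?_⟩
          have : |y - fZ k| ≤ (1 : ℤ) := by
            rw [abs_le]; simp only [fZ]; split_ifs <;> omega
          exact_mod_cast this
  · intro κ hκ
    rintro ⟨C, hC, hA⟩
    have key : ∀ n : ℕ, 1 ≤ n →
        |2 * κ - 1| * n ≤ 2 * C ∧ |κ - 1| * n ≤ 2 * C := by
      intro n hn
      constructor
      · have h := hA (Set.Icc (-(2 * (n : ℤ))) (-1)) (Set.finite_Icc _ _)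
        rw [preimage1, ncard_Icc_int, ncard_Icc_int,
          bdry_Icc _ _ (by omega : -(2 * (n : ℤ)) ≤ -1),
          Set.ncard_pair (by omega : -(2 * (n : ℤ)) - 1 ≠ (-1 : ℤ) + 1)] at h
        have e1 : ((-1 : ℤ) + 1 - -(2 * (n : ℤ))).toNat = 2 * n := by omega
        have e2 : ((-1 : ℤ) + 1 - -((n : ℤ))).toNat = n := by omega
        rw [e1, e2] at h
        push_cast at h
        have heq : κ * (2 * (n : ℝ)) - n = (2 * κ - 1) * n := by ring
        rw [heq, abs_mul, abs_of_nonneg (by positivity : (0 : ℝ) ≤ (n : ℝ))] at h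
        linarith
      · have h := hA (Set.Icc 0 ((n : ℤ) - 1)) (Set.finite_Icc _ _)
        rw [preimage2, ncard_Icc_int,
          bdry_Icc _ _ (by omega : (0 : ℤ) ≤ (n : ℤ) - 1),
          Set.ncard_pair (by omega : (0 : ℤ) - 1 ≠ ((n : ℤ) - 1) + 1)] at h
        have e1 : ((n : ℤ) - 1 + 1 - 0).toNat = n := by omega
        rw [e1] at h
        push_cast at h
        have heq : κ * (n : ℝ) - n = (κ - 1) * n := by ring
        rw [heq, abs_mul, abs_of_nonneg (by positivity : (0 : ℝ) ≤ (n : ℝ))] at h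
        linarith
    have hm : 0 < |2 * κ - 1| + |κ - 1| := by
      rcases eq_or_ne κ 1 with rfl | h
      · norm_num
      · have h1 : 0 < |κ - 1| := abs_pos.mpr (sub_ne_zero.mpr h)
        have h2 := abs_nonneg (2 * κ - 1)
        linarith
    obtain ⟨n, hn⟩ := exists_nat_gt (4 * C / (|2 * κ - 1| + |κ - 1|))
    have hpos : 0 < 4 * C / (|2 * κ - 1| + |κ - 1|) := by positivity
    have hn1 : 1 ≤ n := by
      rcases Nat.eq_zero_or_pos n with rfl | h
      · simp only [Nat.cast_zero] at hn; linarith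
      · exact h
    obtain ⟨h1, h2⟩ := key n hn1
    rw [div_lt_iff₀ hm] at hn
    have hsum : (|2 * κ - 1| + |κ - 1|) * n = |2 * κ - 1| * n + |κ - 1| * n := by ring
    linarith
end

section
/- Let Γ be a group with finite generating set S and H ≤ Γ a subgroup of finite index k. Then the inclusion map H → Γ, where H is equipped with the word metric of some finite generating set and Γ with the word metric of S, is a quasi-(1/k)-to-one quasi-isometry. -/
/-!
Let `R` bound the word length of a set of representatives of the cosets of `H`. Every element of
`Γ` then lies within distance `R` of `H`, and a retraction `Γ → H` moving points by at most `R`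
is Lipschitz for the word metric of `H`, because `H` meets each ball of `Γ` in finitely many
elements. Together with the obvious Lipschitz bound for the inclusion this gives the
quasi-isometry.

For the counting statement, split a finite `A ⊆ Γ` along the `k` right cosets `H g⁻¹`. Right
multiplication by `g` maps `H g⁻¹` onto `H` and moves every point by `|g| ≤ R`, so a point of
`A ∩ H g⁻¹` that is not sent into `A ∩ H` lies within `R` of the boundary `∂A`, and conversely.
Hence each `|A ∩ H g⁻¹|` differs from `|A ∩ H|` by at most `|N_R(∂A)| ≤ (D + 1)^R |∂A|`, where
`D = |S ∪ S⁻¹|` bounds the degrees, and averaging over the `k` cosets bounds `|(1/k)|A| - |A ∩ H||`.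
-/

open Set

/-- The Cayley graph of a group with respect to a (symmetrized) generating set. -/
def cayley (Γ : Type*) [Group Γ] (S : Set Γ) : SimpleGraph Γ where
  Adj x y := x ≠ y ∧ (x⁻¹ * y ∈ S ∨ y⁻¹ * x ∈ S)
  symm := by
    constructor
    intro x y h
    exact ⟨h.1.symm, h.2.symm⟩
  loopless := by
    constructor
    intro x h
    exact h.1 rfl

namespace SimpleGraph

variable {V W : Type*} {G : SimpleGraph V} {G' : SimpleGraph W}

theorem Hom.dist_le (φ : G →g G') {x y : V} (h : G.Reachable x y) :
    G'.dist (φ x) (φ y) ≤ G.dist x y := by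
  obtain ⟨w, hw⟩ := h.exists_walk_length_eq_dist
  exact hw ▸ (SimpleGraph.dist_le (w.map φ)).trans_eq (Walk.length_map φ w)

theorem Iso.dist_eq (φ : G ≃g G') (x y : V) : G'.dist (φ x) (φ y) = G.dist x y := by
  by_cases h : G.Reachable x y
  · refine le_antisymm (φ.toHom.dist_le h) ?_
    simpa using φ.symm.toHom.dist_le (h.map φ.toHom)
  · rw [dist_eq_zero_of_not_reachable h,
      dist_eq_zero_of_not_reachable (mt Iso.reachable_iff.mp h)]

theorem dist_le_mul_length_of_adj (hG' : G'.Connected) {f : V → W} {M : ℕ}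
    (hf : ∀ x y, G.Adj x y → G'.dist (f x) (f y) ≤ M) {x y : V} (w : G.Walk x y) :
    G'.dist (f x) (f y) ≤ M * w.length := by
  induction w with
  | nil => simp
  | cons hadj p ih =>
    calc _ ≤ _ := hG'.dist_triangle
      _ ≤ M + M * p.length := add_le_add (hf _ _ hadj) ih
      _ = _ := by rw [Walk.length_cons]; ring

theorem dist_le_mul_dist_of_adj (hG' : G'.Connected) {f : V → W} {M : ℕ}
    (hf : ∀ x y, G.Adj x y → G'.dist (f x) (f y) ≤ M) {x y : V} (h : G.Reachable x y) :
    G'.dist (f x) (f y) ≤ M * G.dist x y := by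
  obtain ⟨w, hw⟩ := h.exists_walk_length_eq_dist
  exact hw ▸ dist_le_mul_length_of_adj hG' hf w

end SimpleGraph

section Neighborhoods

variable {V : Type*} {G : SimpleGraph V}

lemma subset_gNbhd (A : Set V) (r : ℕ) : A ⊆ gNbhd G A r :=
  fun a ha => ⟨a, ha, by simp⟩

lemma gNbhd_zero (hc : G.Connected) (A : Set V) : gNbhd G A 0 = A := by
  refine (subset_gNbhd A 0).antisymm' ?_
  rintro x ⟨a, ha, hd⟩
  rwa [hc.dist_eq_zero_iff.mp (Nat.le_zero.mp hd)]

lemma gNbhd_one_subset (hc : G.Connected) (A : Set V) :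
    gNbhd G A 1 ⊆ A ∪ ⋃ a ∈ A, G.neighborSet a := by
  rintro x ⟨a, ha, hd⟩
  rcases Nat.le_one_iff_eq_zero_or_eq_one.mp hd with h | h
  · exact .inl (hc.dist_eq_zero_iff.mp h ▸ ha)
  · exact .inr (mem_biUnion ha (SimpleGraph.dist_eq_one_iff_adj.mp h).symm)

lemma gNbhd_succ_subset (hc : G.Connected) (A : Set V) (r : ℕ) :
    gNbhd G A (r + 1) ⊆ gNbhd G (gNbhd G A r) 1 := by
  rintro x ⟨a, ha, hd⟩
  obtain ⟨w, hw⟩ := hc.exists_walk_length_eq_dist x a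
  cases w with
  | nil => exact subset_gNbhd _ 1 (subset_gNbhd A r ha)
  | cons hadj p =>
    refine ⟨_, ⟨a, ha, ?_⟩, SimpleGraph.dist_le hadj.toWalk⟩
    have := SimpleGraph.dist_le p
    simp only [SimpleGraph.Walk.length_cons] at hw
    omega

lemma finite_gNbhd_one_and_ncard_le (hc : G.Connected) (hfin : ∀ v, (G.neighborSet v).Finite)
    {D : ℕ} (hdeg : BddDeg G D) {A : Set V} (hA : A.Finite) :
    (gNbhd G A 1).Finite ∧ (gNbhd G A 1).ncard ≤ (D + 1) * A.ncard := by
  obtain ⟨A, rfl⟩ := hA.exists_finset_coe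
  have hsub : gNbhd G A 1 ⊆ A ∪ ⋃ a ∈ A, G.neighborSet a := by
    simpa using gNbhd_one_subset hc (A : Set V)
  have hfin' : ((A : Set V) ∪ ⋃ a ∈ A, G.neighborSet a).Finite :=
    A.finite_toSet.union (A.finite_toSet.biUnion fun a _ => hfin a)
  refine ⟨hfin'.subset hsub, ?_⟩
  calc (gNbhd G A 1).ncard ≤ ((A : Set V) ∪ ⋃ a ∈ A, G.neighborSet a).ncard :=
        ncard_le_ncard hsub hfin'
    _ ≤ A.card + ∑ a ∈ A, (G.neighborSet a).ncard := by
        refine (ncard_union_le _ _).trans ?_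
        rw [ncard_coe_finset]
        exact Nat.add_le_add_left (A.set_ncard_biUnion_le _) _
    _ ≤ A.card + ∑ _a ∈ A, D := by gcongr with a; exact hdeg a
    _ = (D + 1) * (A : Set V).ncard := by simp; ring

lemma finite_gNbhd_and_ncard_le (hc : G.Connected) (hfin : ∀ v, (G.neighborSet v).Finite)
    {D : ℕ} (hdeg : BddDeg G D) (r : ℕ) {A : Set V} (hA : A.Finite) :
    (gNbhd G A r).Finite ∧ (gNbhd G A r).ncard ≤ (D + 1) ^ r * A.ncard := by
  induction r with
  | zero => simpa [gNbhd_zero hc] using hA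
  | succ r ih =>
    obtain ⟨hfin₁, hcard₁⟩ := finite_gNbhd_one_and_ncard_le hc hfin hdeg ih.1
    refine ⟨hfin₁.subset (gNbhd_succ_subset hc A r), ?_⟩
    calc (gNbhd G A (r + 1)).ncard ≤ (gNbhd G (gNbhd G A r) 1).ncard :=
          ncard_le_ncard (gNbhd_succ_subset hc A r) hfin₁
      _ ≤ (D + 1) * ((D + 1) ^ r * A.ncard) := hcard₁.trans (by gcongr; exact ih.2)
      _ = (D + 1) ^ (r + 1) * A.ncard := by ring

lemma exists_mem_gBdry_dist_le_length (hc : G.Connected) {A : Set V} {x y : V}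
    (w : G.Walk x y) (hx : x ∈ A) (hy : y ∉ A) : ∃ z ∈ gBdry G A, G.dist x z ≤ w.length := by
  induction w with
  | nil => exact absurd hx hy
  | @cons a b c hadj p ih =>
    have hab : G.dist a b ≤ 1 := SimpleGraph.dist_le hadj.toWalk
    simp only [SimpleGraph.Walk.length_cons]
    by_cases hb : b ∈ A
    · obtain ⟨z, hz, hbz⟩ := ih hb hy
      exact ⟨z, hz, (hc.dist_triangle (v := b)).trans (by omega)⟩
    · exact ⟨b, ⟨⟨a, hx, by rwa [SimpleGraph.dist_comm]⟩, hb⟩, by omega⟩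

lemma mem_gNbhd_gBdry_of_dist_le (hc : G.Connected) {A : Set V} {x y : V} {R : ℕ}
    (hx : x ∈ A) (hy : y ∉ A) (hd : G.dist x y ≤ R) : x ∈ gNbhd G (gBdry G A) R := by
  obtain ⟨w, hw⟩ := hc.exists_walk_length_eq_dist x y
  obtain ⟨z, hz, hxz⟩ := exists_mem_gBdry_dist_le_length hc w hx hy
  exact ⟨z, hz, by omega⟩

end Neighborhoods

lemma isQI_of_dist_le_mul {X Y : Type*} {G : SimpleGraph X} {G' : SimpleGraph Y} {f : X → Y}
    {L M R : ℕ} (hup : ∀ x y, G'.dist (f x) (f y) ≤ L * G.dist x y)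
    (hlow : ∀ x y, G.dist x y ≤ M * G'.dist (f x) (f y))
    (hdense : ∀ y, ∃ x, G'.dist y (f x) ≤ R) : IsQI G G' f := by
  have hR : (0 : ℝ) ≤ R := R.cast_nonneg
  refine ⟨(L + M + 1 : ℕ), R, by exact_mod_cast Nat.le_add_left 1 _, hR,
    fun x y => ⟨?_, ?_⟩, fun y => ?_⟩
  · have h : G.dist x y ≤ (L + M + 1) * G'.dist (f x) (f y) :=
      (hlow x y).trans (Nat.mul_le_mul_right _ (by omega))
    have h' : 1 / ((L + M + 1 : ℕ) : ℝ) * G.dist x y ≤ G'.dist (f x) (f y) := by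
      rw [one_div, inv_mul_le_iff₀ (by positivity)]
      exact_mod_cast h
    linarith
  · have h : G'.dist (f x) (f y) ≤ (L + M + 1) * G.dist x y :=
      (hup x y).trans (Nat.mul_le_mul_right _ (by omega))
    have h' : (G'.dist (f x) (f y) : ℝ) ≤ ((L + M + 1 : ℕ) : ℝ) * G.dist x y := by
      exact_mod_cast h
    linarith
  · obtain ⟨x, hx⟩ := hdense y
    exact ⟨x, by exact_mod_cast hx⟩

lemma ncard_eq_sum_ncard_inter_preimage {α ι : Type*} [Fintype ι] (f : α → ι) {A : Set α}
    (hA : A.Finite) : A.ncard = ∑ i, (A ∩ f ⁻¹' {i}).ncard := by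
  rw [← finsum_eq_sum_of_fintype, ← ncard_iUnion_of_finite (fun _ => hA.inter_of_left _)]
  · congr; ext x; simp
  · intro i j hij
    exact Disjoint.mono inter_subset_right inter_subset_right
      (disjoint_singleton.mpr hij |>.preimage f)

lemma abs_inv_card_mul_sum_sub_le {ι : Type*} [Fintype ι] [Nonempty ι] {f : ι → ℝ} {a E : ℝ}
    (h : ∀ i, |f i - a| ≤ E) : |1 / Fintype.card ι * ∑ i, f i - a| ≤ E := by
  have hn : (0 : ℝ) < Fintype.card ι := by exact_mod_cast Fintype.card_pos
  have hsum : 1 / Fintype.card ι * ∑ i, f i - a = 1 / Fintype.card ι * ∑ i, (f i - a) := by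
    rw [Finset.sum_sub_distrib, Finset.sum_const, Finset.card_univ, nsmul_eq_mul]
    field_simp
  rw [hsum, abs_mul, abs_of_pos (by positivity), one_div, inv_mul_le_iff₀ hn]
  calc |∑ i, (f i - a)| ≤ ∑ i, |f i - a| := Finset.abs_sum_le_sum_abs _ _
    _ ≤ ∑ _i : ι, E := Finset.sum_le_sum fun i _ => h i
    _ = Fintype.card ι * E := by simp

section Cayley

variable {Γ : Type*} [Group Γ] {S : Set Γ}

def cayleyMulLeft (S : Set Γ) (g : Γ) : cayley Γ S ≃g cayley Γ S where
  toEquiv := Equiv.mulLeft g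
  map_rel_iff' := by simp [cayley, mul_assoc]

@[simp]
lemma cayleyMulLeft_apply (S : Set Γ) (g x : Γ) : cayleyMulLeft S g x = g * x := rfl

lemma cayley_dist_mul_left (g x y : Γ) :
    (cayley Γ S).dist (g * x) (g * y) = (cayley Γ S).dist x y :=
  (cayleyMulLeft S g).dist_eq x y

lemma cayley_dist_eq_dist_one (x y : Γ) :
    (cayley Γ S).dist x y = (cayley Γ S).dist 1 (x⁻¹ * y) := by
  rw [← cayley_dist_mul_left x⁻¹, inv_mul_cancel]

lemma cayley_dist_self_mul (x g : Γ) : (cayley Γ S).dist x (x * g) = (cayley Γ S).dist 1 g := by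
  rw [cayley_dist_eq_dist_one, inv_mul_cancel_left]

lemma cayley_dist_one_inv (g : Γ) : (cayley Γ S).dist 1 g⁻¹ = (cayley Γ S).dist 1 g := by
  rw [SimpleGraph.dist_comm, cayley_dist_eq_dist_one, inv_inv, mul_one]

lemma cayley_connected (hS : Subgroup.closure S = ⊤) : (cayley Γ S).Connected := by
  have hreach : ∀ g : Γ, (cayley Γ S).Reachable 1 g := by
    intro g
    induction hS ▸ Subgroup.mem_top g using Subgroup.closure_induction with
    | mem x hx =>
      by_cases hx1 : x = 1
      · rw [hx1]
      · exact SimpleGraph.Adj.reachable ⟨Ne.symm hx1, .inl (by simpa using hx)⟩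
    | one => rfl
    | mul x y _ _ hx hy => exact hx.trans (by simpa using hy.map (cayleyMulLeft S x).toHom)
    | inv x _ hx => simpa using (hx.map (cayleyMulLeft S x⁻¹).toHom).symm
  exact ⟨fun x y => (hreach x).symm.trans (hreach y)⟩

lemma cayley_neighborSet_subset (v : Γ) :
    (cayley Γ S).neighborSet v ⊆ (v * ·) '' (S ∪ S⁻¹) := by
  rintro y ⟨-, h⟩
  exact ⟨v⁻¹ * y, by simpa using h, by simp⟩

lemma cayley_neighborSet_finite (hS : S.Finite) (v : Γ) :
    ((cayley Γ S).neighborSet v).Finite :=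
  ((hS.union hS.inv).image _).subset (cayley_neighborSet_subset v)

lemma cayley_bddDeg (hS : S.Finite) : BddDeg (cayley Γ S) (S ∪ S⁻¹).ncard := fun v =>
  (ncard_le_ncard (cayley_neighborSet_subset v) ((hS.union hS.inv).image _)).trans
    (ncard_image_le (hS.union hS.inv))

lemma cayley_finite_setOf_dist_one_le (hS : S.Finite) (hSgen : Subgroup.closure S = ⊤)
    (r : ℕ) : {g : Γ | (cayley Γ S).dist 1 g ≤ r}.Finite :=
  (finite_gNbhd_and_ncard_le (cayley_connected hSgen) (cayley_neighborSet_finite hS)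
    (cayley_bddDeg hS) r (finite_singleton 1)).1.subset
    fun _ hg => ⟨1, rfl, by rwa [SimpleGraph.dist_comm]⟩

lemma ncard_inter_le_ncard_inter_add_of_mul_mem (hc : (cayley Γ S).Connected) {A : Set Γ}
    (hA : A.Finite) {R : ℕ} (hB : (gNbhd (cayley Γ S) (gBdry (cayley Γ S) A) R).Finite)
    {P Q : Set Γ} {g : Γ} (hPQ : ∀ x ∈ P, x * g ∈ Q) (hg : (cayley Γ S).dist 1 g ≤ R) :
    (A ∩ P).ncard ≤ (A ∩ Q).ncard + (gNbhd (cayley Γ S) (gBdry (cayley Γ S) A) R).ncard := by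
  set E := gNbhd (cayley Γ S) (gBdry (cayley Γ S) A) R
  have hsub : A ∩ P ⊆ (· * g⁻¹) '' (A ∩ Q) ∪ E := by
    rintro x ⟨hxA, hxP⟩
    by_cases hxg : x * g ∈ A
    · exact .inl ⟨x * g, ⟨hxg, hPQ x hxP⟩, mul_inv_cancel_right x g⟩
    · exact .inr (mem_gNbhd_gBdry_of_dist_le hc hxA hxg ((cayley_dist_self_mul x g).trans_le hg))
  calc (A ∩ P).ncard ≤ ((· * g⁻¹) '' (A ∩ Q) ∪ E).ncard :=
        ncard_le_ncard hsub (((hA.inter_of_left Q).image _).union hB)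
    _ ≤ ((· * g⁻¹) '' (A ∩ Q)).ncard + E.ncard := ncard_union_le _ _
    _ ≤ (A ∩ Q).ncard + E.ncard :=
        Nat.add_le_add_right (ncard_image_le (hA.inter_of_left Q)) _

end Cayley

section FiniteIndex

variable {Γ : Type*} [Group Γ] {S : Set Γ} {H : Subgroup Γ} {T : Set H}

/-- The right coset `H x`, recorded as the left coset `x⁻¹ H ∈ Γ ⧸ H`. -/
def rightCosetClass (H : Subgroup Γ) (x : Γ) : Γ ⧸ H := (x⁻¹ : Γ)

lemma mul_out_mem_of_rightCosetClass_eq {x : Γ} {c : Γ ⧸ H} (hx : rightCosetClass H x = c) :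
    x * c.out ∈ H := by
  simpa using QuotientGroup.eq.mp (hx.trans (QuotientGroup.out_eq' c).symm)

lemma rightCosetClass_mul_inv_out {h : Γ} (hh : h ∈ H) (c : Γ ⧸ H) :
    rightCosetClass H (h * c.out⁻¹) = c := by
  conv_rhs => rw [← QuotientGroup.out_eq' c]
  exact QuotientGroup.eq.mpr (by simpa [mul_assoc] using hh)

lemma exists_retraction_dist_le {R : ℕ} (hR : ∀ c : Γ ⧸ H, (cayley Γ S).dist 1 c.out ≤ R) :
    ∃ σ : Γ → H, (∀ x, (cayley Γ S).dist x (σ x) ≤ R) ∧ ∀ h : H, σ h = h := by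
  classical
  refine ⟨fun x => if hx : x ∈ H then ⟨x, hx⟩
    else ⟨x * (rightCosetClass H x).out, mul_out_mem_of_rightCosetClass_eq rfl⟩,
    fun x => ?_, fun h => dif_pos h.2⟩
  dsimp only
  split_ifs
  · simp
  · exact (cayley_dist_self_mul _ _).trans_le (hR _)

lemma exists_cayley_dist_coe_le_mul (hSgen : Subgroup.closure S = ⊤) (hT : T.Finite)
    (hTgen : Subgroup.closure T = ⊤) :
    ∃ L : ℕ, ∀ a b : H, (cayley Γ S).dist a b ≤ L * (cayley H T).dist a b := by
  obtain ⟨L, hL⟩ := (hT.image fun t : H => (cayley Γ S).dist 1 t).exists_le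
  refine ⟨L, fun a b => SimpleGraph.dist_le_mul_dist_of_adj (f := ((↑) : H → Γ))
    (cayley_connected hSgen) ?_ ((cayley_connected hTgen).preconnected a b)⟩
  rintro a b ⟨-, hab | hab⟩
  · rw [cayley_dist_eq_dist_one]
    exact hL _ ⟨_, hab, by simp⟩
  · rw [SimpleGraph.dist_comm, cayley_dist_eq_dist_one]
    exact hL _ ⟨_, hab, by simp⟩

lemma exists_dist_le_of_cayley_dist_coe_le (hS : S.Finite) (hSgen : Subgroup.closure S = ⊤)
    (r : ℕ) : ∃ M : ℕ, ∀ a b : H, (cayley Γ S).dist a b ≤ r → (cayley H T).dist a b ≤ M := by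
  have hball : {h : H | (cayley Γ S).dist 1 h ≤ r}.Finite :=
    (cayley_finite_setOf_dist_one_le hS hSgen r).preimage Subtype.val_injective.injOn
  obtain ⟨M, hM⟩ := (hball.image fun h => (cayley H T).dist 1 h).exists_le
  refine ⟨M, fun a b hab => ?_⟩
  rw [cayley_dist_eq_dist_one]
  refine hM _ ⟨a⁻¹ * b, ?_, rfl⟩
  simpa [cayley_dist_eq_dist_one (S := S) (a : Γ)] using hab

lemma exists_dist_le_mul_cayley_dist_coe (hS : S.Finite) (hSgen : Subgroup.closure S = ⊤)
    (hTgen : Subgroup.closure T = ⊤) {R : ℕ}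
    (hR : ∀ c : Γ ⧸ H, (cayley Γ S).dist 1 c.out ≤ R) :
    ∃ M : ℕ, ∀ a b : H, (cayley H T).dist a b ≤ M * (cayley Γ S).dist a b := by
  have hc := cayley_connected hSgen
  obtain ⟨σ, hσ, hσH⟩ := exists_retraction_dist_le hR
  obtain ⟨M, hM⟩ := exists_dist_le_of_cayley_dist_coe_le (T := T) hS hSgen (2 * R + 1)
  refine ⟨M, fun a b => ?_⟩
  have hadj : ∀ x y, (cayley Γ S).Adj x y → (cayley H T).dist (σ x) (σ y) ≤ M := by
    intro x y hxy
    refine hM _ _ ?_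
    have h₁ := hc.dist_triangle (u := (σ x : Γ)) (v := x) (w := σ y)
    have h₂ := hc.dist_triangle (u := x) (v := y) (w := (σ y : Γ))
    have h₃ := SimpleGraph.dist_le hxy.toWalk
    have h₄ : (cayley Γ S).dist (σ x) x = (cayley Γ S).dist x (σ x) := SimpleGraph.dist_comm
    have := hσ x
    have := hσ y
    simp only [SimpleGraph.Walk.length_cons, SimpleGraph.Walk.length_nil] at h₃
    omega
  simpa [hσH] using SimpleGraph.dist_le_mul_dist_of_adj (cayley_connected hTgen) hadj
    (hc.preconnected a b)

lemma isQI_subtype_val (hS : S.Finite) (hSgen : Subgroup.closure S = ⊤) (hT : T.Finite)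
    (hTgen : Subgroup.closure T = ⊤) [H.FiniteIndex] :
    IsQI (cayley H T) (cayley Γ S) ((↑) : H → Γ) := by
  obtain ⟨R, hR⟩ := Finite.exists_le fun c : Γ ⧸ H => (cayley Γ S).dist 1 c.out
  obtain ⟨σ, hσ, -⟩ := exists_retraction_dist_le hR
  obtain ⟨L, hL⟩ := exists_cayley_dist_coe_le_mul hSgen hT hTgen
  obtain ⟨M, hM⟩ := exists_dist_le_mul_cayley_dist_coe hS hSgen hTgen hR
  exact isQI_of_dist_le_mul hL hM fun y => ⟨σ y, hσ y⟩

lemma abs_ncard_inter_rightCoset_sub_le (hc : (cayley Γ S).Connected) {A : Set Γ}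
    (hA : A.Finite) {R : ℕ} (hB : (gNbhd (cayley Γ S) (gBdry (cayley Γ S) A) R).Finite)
    {c : Γ ⧸ H} (hcR : (cayley Γ S).dist 1 c.out ≤ R) :
    |((A ∩ rightCosetClass H ⁻¹' {c}).ncard : ℝ) - (A ∩ H).ncard| ≤
      (gNbhd (cayley Γ S) (gBdry (cayley Γ S) A) R).ncard := by
  have h₁ := ncard_inter_le_ncard_inter_add_of_mul_mem hc hA hB (Q := H)
    (fun x hx => mul_out_mem_of_rightCosetClass_eq hx) hcR
  have h₂ := ncard_inter_le_ncard_inter_add_of_mul_mem hc hA hB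
    (Q := rightCosetClass H ⁻¹' {c}) (fun x hx => rightCosetClass_mul_inv_out hx c)
    ((cayley_dist_one_inv _).trans_le hcR)
  rw [abs_sub_le_iff, sub_le_iff_le_add', sub_le_iff_le_add']
  exact ⟨by exact_mod_cast h₁, by exact_mod_cast h₂⟩

lemma ncard_preimage_subtype_val (A : Set Γ) : (((↑) : H → Γ) ⁻¹' A).ncard = (A ∩ H).ncard := by
  rw [← ncard_image_of_injective _ Subtype.val_injective, image_preimage_eq_inter_range,
    Subtype.range_coe]

lemma quasiKToOne_subtype_val (hS : S.Finite) (hSgen : Subgroup.closure S = ⊤)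
    [H.FiniteIndex] : QuasiKToOne (cayley Γ S) ((↑) : H → Γ) (1 / (H.index : ℝ)) := by
  have := Fintype.ofFinite (Γ ⧸ H)
  have hc := cayley_connected hSgen
  have growth := finite_gNbhd_and_ncard_le hc (cayley_neighborSet_finite hS) (cayley_bddDeg hS)
  obtain ⟨R, hR⟩ := Finite.exists_le fun c : Γ ⧸ H => (cayley Γ S).dist 1 c.out
  refine ⟨(((S ∪ S⁻¹).ncard + 1) ^ R : ℕ), by positivity, fun A hA => ?_⟩
  obtain ⟨hB, hBcard⟩ := growth R ((growth 1 hA).1.subset sdiff_subset)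
  rw [Subgroup.index_eq_card, Nat.card_eq_fintype_card,
    ncard_eq_sum_ncard_inter_preimage (rightCosetClass H) hA, ncard_preimage_subtype_val]
  push_cast
  calc _ ≤ ((gNbhd (cayley Γ S) (gBdry (cayley Γ S) A) R).ncard : ℝ) :=
        abs_inv_card_mul_sum_sub_le fun c => abs_ncard_inter_rightCoset_sub_le hc hA hB (hR c)
    _ ≤ _ := by exact_mod_cast hBcard

end FiniteIndex

/-- The inclusion of a finite-index subgroup `H ≤ Γ` of index `k`
(with respect to word metrics of finite generating sets) is a quasi-`(1/k)`-to-one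
quasi-isometry. -/
theorem inclusion_quasiOneOverKToOne {Γ : Type*} [Group Γ]
    (S : Set Γ) (hSfin : S.Finite) (hSgen : Subgroup.closure S = ⊤)
    (H : Subgroup Γ) (k : ℕ) (hk : 0 < k) (hidx : H.index = k)
    (T : Set H) (hTfin : T.Finite) (hTgen : Subgroup.closure T = ⊤) :
    IsQI (cayley H T) (cayley Γ S) ((↑) : H → Γ) ∧
      QuasiKToOne (cayley Γ S) ((↑) : H → Γ) (1 / (k : ℝ)) := by
  have : H.FiniteIndex := ⟨by omega⟩
  subst hidx
  exact ⟨isQI_subtype_val hSfin hSgen hTfin hTgen, quasiKToOne_subtype_val hSfin hSgen⟩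
end
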